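/- arXiv:2511.03440 — 2 statements merged into one kernel-verified Lean document; each statement's English description precedes it below -/
import Mathlib

section
/- Let p : ℝ^n → ℝ be a polynomial function of degree d whose Hessian determinant h_p(x) = det(∇²p(x)) is not identically zero on ℝ^n. Then there exists a point a ∈ ℤ^n with all coordinates in {0, 1, …, d·n} such that det(∇²p(a)) ≠ 0. -/
/-!
The Hessian determinant of `p = eval · q` is the evaluation of the polynomial
`det (∂ᵢ∂ⱼ q)`, whose entries have total degree at most `d`, so it has total degree at
most `d * n`. A nonzero polynomial of degree at most `D` in each variable does not vanish
on the whole grid `{0, …, D}ⁿ` (combinatorial Nullstellensatz).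
-/

/-- The Hessian matrix of a function `p : ℝⁿ → ℝ` at a point `x`,
whose `(i,j)` entry is the second partial derivative `∂²p/∂xᵢ∂xⱼ (x)`. -/
noncomputable def hess {n : ℕ} (p : EuclideanSpace ℝ (Fin n) → ℝ)
    (x : EuclideanSpace ℝ (Fin n)) : Matrix (Fin n) (Fin n) ℝ :=
  Matrix.of fun i j =>
    fderiv ℝ (fun y => fderiv ℝ p y (EuclideanSpace.single j 1)) x (EuclideanSpace.single i 1)

namespace MvPolynomial

section Calculus

variable {𝕜 σ : Type*} [NontriviallyNormedField 𝕜] [Fintype σ]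

theorem hasFDerivAt_eval (q : MvPolynomial σ 𝕜) (x : σ → 𝕜) :
    HasFDerivAt (fun y => eval y q)
      (∑ i, eval x (pderiv i q) • (ContinuousLinearMap.proj i : (σ → 𝕜) →L[𝕜] 𝕜)) x := by
  induction q using MvPolynomial.induction_on with
  | C a =>
    simp only [eval_C]
    refine (hasFDerivAt_const (𝕜 := 𝕜) a x).congr_fderiv ?_
    ext v
    simp
  | add f g hf hg =>
    simp only [eval_add]
    refine (hf.fun_add hg).congr_fderiv ?_
    ext v
    simp [add_mul, Finset.sum_add_distrib]
  | mul_X f j hf =>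
    classical
    simp only [eval_mul, eval_X]
    refine (hf.fun_mul (hasFDerivAt_apply j x)).congr_fderiv ?_
    ext v
    simp [Pi.single_apply, apply_ite, mul_add, Finset.sum_add_distrib, Finset.mul_sum,
      mul_left_comm, mul_comm]

end Calculus

section CommSemiring

variable {R σ : Type*} [CommSemiring R]

theorem totalDegree_pderiv_le (i : σ) (f : MvPolynomial σ R) :
    (pderiv i f).totalDegree ≤ f.totalDegree := by
  classical
  conv_lhs => rw [f.as_sum]
  rw [map_sum]
  refine totalDegree_finsetSum_le fun v hv => ?_
  rw [pderiv_monomial]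
  refine (totalDegree_monomial_le _ _).trans ((le_totalDegree hv).trans' ?_)
  exact Finsupp.degree_mono tsub_le_self

noncomputable def hessian (q : MvPolynomial σ R) : Matrix σ σ (MvPolynomial σ R) :=
  Matrix.of fun i j => pderiv i (pderiv j q)

end CommSemiring

section CommRing

variable {R σ : Type*} [CommRing R]

theorem totalDegree_det_le {ι : Type*} [Fintype ι] [DecidableEq ι]
    (M : Matrix ι ι (MvPolynomial σ R)) {d : ℕ} (hM : ∀ i j, (M i j).totalDegree ≤ d) :
    M.det.totalDegree ≤ Fintype.card ι * d := by
  rw [Matrix.det_apply']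
  refine totalDegree_finsetSum_le fun τ _ => (totalDegree_mul _ _).trans ?_
  rw [← map_intCast (C : R →+* MvPolynomial σ R), totalDegree_C, zero_add]
  refine (totalDegree_finsetProd _ _).trans ?_
  exact (Finset.sum_le_sum fun i _ => hM (τ i) i).trans_eq (by simp)

theorem totalDegree_det_hessian_le [Fintype σ] [DecidableEq σ] (q : MvPolynomial σ R) :
    (hessian q).det.totalDegree ≤ Fintype.card σ * q.totalDegree :=
  totalDegree_det_le _ fun i j => (totalDegree_pderiv_le i _).trans (totalDegree_pderiv_le j q)

theorem exists_eval_natCast_ne_zero_of_totalDegree_le [IsDomain R] [CharZero R] [Finite σ]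
    {P : MvPolynomial σ R} (hP : P ≠ 0) {D : ℕ} (hD : P.totalDegree ≤ D) :
    ∃ a : σ → ℕ, (∀ i, a i ≤ D) ∧ eval (fun i => (a i : R)) P ≠ 0 := by
  set S : Finset R := (Finset.range (D + 1)).map Nat.castEmbedding
  have hS : S.card = D + 1 := by simp [S]
  by_contra! h
  refine hP (eq_zero_of_eval_zero_at_prod_finset P (fun _ => S)
    (fun i => hS ▸ Nat.lt_succ_of_le ((degreeOf_le_totalDegree P i).trans hD)) fun x hx => ?_)
  choose a ha hax using fun i => Finset.mem_map.mp (hx i)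
  obtain rfl : (fun i => (a i : R)) = x := _root_.funext hax
  exact h a fun i => Nat.lt_succ_iff.mp (Finset.mem_range.mp (ha i))

end CommRing

section Euclidean

variable {𝕜 σ : Type*} [RCLike 𝕜] [Fintype σ]

theorem fderiv_eval_ofLp_single [DecidableEq σ] (q : MvPolynomial σ 𝕜) (x : EuclideanSpace 𝕜 σ)
    (j : σ) :
    fderiv 𝕜 (fun y : EuclideanSpace 𝕜 σ => eval (fun i => y i) q) x (EuclideanSpace.single j 1) =
      eval (fun i => x i) (pderiv j q) := by
  change fderiv 𝕜 ((fun z => eval z q) ∘ WithLp.ofLp) x _ = _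
  rw [((hasFDerivAt_eval q x).comp x (PiLp.hasFDerivAt_ofLp 2 x)).fderiv]
  simp

end Euclidean

end MvPolynomial

open MvPolynomial

theorem hess_eval {n : ℕ} (q : MvPolynomial (Fin n) ℝ) (x : EuclideanSpace ℝ (Fin n)) :
    hess (fun y => eval (fun i => y i) q) x = (hessian q).map (eval fun i => x i) := by
  ext i j
  simp only [hess, hessian, Matrix.of_apply, Matrix.map_apply, fderiv_eval_ofLp_single]

theorem det_hess_eval {n : ℕ} (q : MvPolynomial (Fin n) ℝ) (x : EuclideanSpace ℝ (Fin n)) :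
    (hess (fun y => eval (fun i => y i) q) x).det = eval (fun i => x i) (hessian q).det := by
  rw [hess_eval, RingHom.map_det]
  rfl

/-- If the Hessian determinant of a polynomial function of degree `d`
is not identically zero, then it is nonzero at some integer point with coordinates
in `{0, 1, …, d·n}`. -/
theorem hessian_det_nonzero_at_small_point {n d : ℕ}
    (p : EuclideanSpace ℝ (Fin n) → ℝ)
    (q : MvPolynomial (Fin n) ℝ)
    (hpq : ∀ x, p x = MvPolynomial.eval (fun i => x i) q)
    (hdeg : q.totalDegree = d)
    (hdet : ¬ ∀ x, (hess p x).det = 0) :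
    ∃ a : Fin n → ℕ, (∀ i, a i ≤ d * n) ∧
      (hess p (WithLp.toLp 2 (fun i => (a i : ℝ)) : EuclideanSpace ℝ (Fin n))).det ≠ 0 := by
  obtain rfl : p = fun y => eval (fun i => y i) q := funext hpq
  have hne : (hessian q).det ≠ 0 := fun h => hdet fun x => by rw [det_hess_eval, h, map_zero]
  have hdeg_det : (hessian q).det.totalDegree ≤ d * n := by
    simpa [hdeg, mul_comm] using totalDegree_det_hessian_le q
  obtain ⟨a, ha, hne_a⟩ := exists_eval_natCast_ne_zero_of_totalDegree_le hne hdeg_det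
  exact ⟨a, ha, by rwa [det_hess_eval]⟩
end

section
/- Let p : ℝ^5 → ℝ be the polynomial function p(x) = x₁·x₄² + 2·x₂·x₄·x₅ + x₃·x₅². Then (i) det(∇²p(x)) = 0 for all x ∈ ℝ^5, and (ii) p has no direction of linearity: there do not exist a nonzero vector v ∈ ℝ^5 and a constant c ∈ ℝ such that ⟨v, ∇p(x)⟩ = c for all x ∈ ℝ^5. -/
open RealInnerProductSpace

namespace GH

noncomputable abbrev pr (i : Fin 5) : EuclideanSpace ℝ (Fin 5) →L[ℝ] ℝ :=
  EuclideanSpace.proj i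

noncomputable abbrev D (y : EuclideanSpace ℝ (Fin 5)) : EuclideanSpace ℝ (Fin 5) →L[ℝ] ℝ :=
  (y 3)^2 • pr 0 + (2*y 3*y 4) • pr 1 + (y 4)^2 • pr 2
  + (2*y 0*y 3 + 2*y 1*y 4) • pr 3 + (2*y 1*y 3 + 2*y 2*y 4) • pr 4

lemma hc (y : EuclideanSpace ℝ (Fin 5)) (i : Fin 5) :
    HasFDerivAt (⇑(pr i)) (pr i) y := ContinuousLinearMap.hasFDerivAt _

lemma hasfd (y : EuclideanSpace ℝ (Fin 5)) :
    HasFDerivAt (fun x : EuclideanSpace ℝ (Fin 5) =>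
      x 0 * (x 3)^2 + 2 * x 1 * x 3 * x 4 + x 2 * (x 4)^2) (D y) y := by
  have h := ((((hc y 0).mul ((hc y 3).mul (hc y 3))).add
      (((((hc y 1)).const_mul 2).mul (hc y 3)).mul (hc y 4))).add
      ((hc y 2).mul ((hc y 4).mul (hc y 4))))
  simp only [pow_two]
  exact h.congr_fderiv (by
    ext v
    simp [ContinuousLinearMap.add_apply, ContinuousLinearMap.smul_apply, smul_eq_mul]
    ring)

lemma D_apply (y v : EuclideanSpace ℝ (Fin 5)) :
    D y v = (y 3)^2 * v 0 + (2*y 3*y 4) * v 1 + (y 4)^2 * v 2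
      + (2*y 0*y 3 + 2*y 1*y 4) * v 3 + (2*y 1*y 3 + 2*y 2*y 4) * v 4 := by
  simp [ContinuousLinearMap.add_apply, ContinuousLinearMap.smul_apply, smul_eq_mul]

lemma fderiv_p {p : EuclideanSpace ℝ (Fin 5) → ℝ}
    (hp : ∀ x, p x = x 0 * (x 3) ^ 2 + 2 * x 1 * x 3 * x 4 + x 2 * (x 4) ^ 2)
    (y : EuclideanSpace ℝ (Fin 5)) : fderiv ℝ p y = D y := by
  rw [show p = _ from funext hp]
  exact (hasfd y).fderiv

lemma fd0 (y : EuclideanSpace ℝ (Fin 5)) :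
    HasFDerivAt (fun x : EuclideanSpace ℝ (Fin 5) => (x 3)^2) ((2*y 3) • pr 3) y := by
  simp only [pow_two]
  exact ((hc y 3).mul (hc y 3)).congr_fderiv (by ext v; simp; ring)

lemma fd1 (y : EuclideanSpace ℝ (Fin 5)) :
    HasFDerivAt (fun x : EuclideanSpace ℝ (Fin 5) => 2*x 3*x 4)
      ((2*y 4) • pr 3 + (2*y 3) • pr 4) y :=
  (((hc y 3).const_mul 2).mul (hc y 4)).congr_fderiv (by
    ext v
    simp [ContinuousLinearMap.add_apply, ContinuousLinearMap.smul_apply, smul_eq_mul]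
    ring)

lemma fd2 (y : EuclideanSpace ℝ (Fin 5)) :
    HasFDerivAt (fun x : EuclideanSpace ℝ (Fin 5) => (x 4)^2) ((2*y 4) • pr 4) y := by
  simp only [pow_two]
  exact ((hc y 4).mul (hc y 4)).congr_fderiv (by ext v; simp; ring)

lemma fd3 (y : EuclideanSpace ℝ (Fin 5)) :
    HasFDerivAt (fun x : EuclideanSpace ℝ (Fin 5) => 2*x 0*x 3 + 2*x 1*x 4)
      ((2*y 3) • pr 0 + (2*y 4) • pr 1 + (2*y 0) • pr 3 + (2*y 1) • pr 4) y :=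
  ((((hc y 0).const_mul 2).mul (hc y 3)).add
      (((hc y 1).const_mul 2).mul (hc y 4))).congr_fderiv (by
    ext v
    simp [ContinuousLinearMap.add_apply, ContinuousLinearMap.smul_apply, smul_eq_mul]
    ring)

lemma fd4 (y : EuclideanSpace ℝ (Fin 5)) :
    HasFDerivAt (fun x : EuclideanSpace ℝ (Fin 5) => 2*x 1*x 3 + 2*x 2*x 4)
      ((2*y 3) • pr 1 + (2*y 4) • pr 2 + (2*y 1) • pr 3 + (2*y 2) • pr 4) y :=
  ((((hc y 1).const_mul 2).mul (hc y 3)).add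
      (((hc y 2).const_mul 2).mul (hc y 4))).congr_fderiv (by
    ext v
    simp [ContinuousLinearMap.add_apply, ContinuousLinearMap.smul_apply, smul_eq_mul]
    ring)

end GH

/-- Gordan–Hesse example: the polynomial
`p(x) = x₁x₄² + 2x₂x₄x₅ + x₃x₅²` has identically vanishing Hessian determinant,
yet it has no direction of linearity. -/
theorem gordan_example_vanishing_hessian_no_linearity
    (p : EuclideanSpace ℝ (Fin 5) → ℝ)
    (hp : ∀ x, p x = x 0 * (x 3) ^ 2 + 2 * x 1 * x 3 * x 4 + x 2 * (x 4) ^ 2) :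
    (∀ x, (hess p x).det = 0) ∧
    ¬ ∃ (v : EuclideanSpace ℝ (Fin 5)) (c : ℝ), v ≠ 0 ∧ ∀ x, ⟪v, gradient p x⟫ = c := by
  have hM : ∀ x, hess p x =
      !![0,0,0,2*x 3,0; 0,0,0,2*x 4,2*x 3; 0,0,0,0,2*x 4;
         2*x 3,2*x 4,0,2*x 0,2*x 1; 0,2*x 3,2*x 4,2*x 1,2*x 2] := by
    intro x
    have e0 : (fun y => fderiv ℝ p y (EuclideanSpace.single (0:Fin 5) 1))
        = fun y : EuclideanSpace ℝ (Fin 5) => (y 3)^2 := by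
      funext y; rw [GH.fderiv_p hp, GH.D_apply]; simp [EuclideanSpace.single_apply]
    have e1 : (fun y => fderiv ℝ p y (EuclideanSpace.single (1:Fin 5) 1))
        = fun y : EuclideanSpace ℝ (Fin 5) => 2*y 3*y 4 := by
      funext y; rw [GH.fderiv_p hp, GH.D_apply]; simp [EuclideanSpace.single_apply]
    have e2 : (fun y => fderiv ℝ p y (EuclideanSpace.single (2:Fin 5) 1))
        = fun y : EuclideanSpace ℝ (Fin 5) => (y 4)^2 := by
      funext y; rw [GH.fderiv_p hp, GH.D_apply]; simp [EuclideanSpace.single_apply]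
    have e3 : (fun y => fderiv ℝ p y (EuclideanSpace.single (3:Fin 5) 1))
        = fun y : EuclideanSpace ℝ (Fin 5) => 2*y 0*y 3 + 2*y 1*y 4 := by
      funext y; rw [GH.fderiv_p hp, GH.D_apply]; simp [EuclideanSpace.single_apply]
    have e4 : (fun y => fderiv ℝ p y (EuclideanSpace.single (4:Fin 5) 1))
        = fun y : EuclideanSpace ℝ (Fin 5) => 2*y 1*y 3 + 2*y 2*y 4 := by
      funext y; rw [GH.fderiv_p hp, GH.D_apply]; simp [EuclideanSpace.single_apply]
    ext i j
    fin_cases j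
    · show fderiv ℝ (fun y => fderiv ℝ p y (EuclideanSpace.single (0:Fin 5) 1))
        x (EuclideanSpace.single i 1) = _
      rw [e0, (GH.fd0 x).fderiv]
      fin_cases i <;> simp [EuclideanSpace.single_apply]
    · show fderiv ℝ (fun y => fderiv ℝ p y (EuclideanSpace.single (1:Fin 5) 1))
        x (EuclideanSpace.single i 1) = _
      rw [e1, (GH.fd1 x).fderiv]
      fin_cases i <;> simp [EuclideanSpace.single_apply]
    · show fderiv ℝ (fun y => fderiv ℝ p y (EuclideanSpace.single (2:Fin 5) 1))
        x (EuclideanSpace.single i 1) = _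
      rw [e2, (GH.fd2 x).fderiv]
      fin_cases i <;> simp [EuclideanSpace.single_apply]
    · show fderiv ℝ (fun y => fderiv ℝ p y (EuclideanSpace.single (3:Fin 5) 1))
        x (EuclideanSpace.single i 1) = _
      rw [e3, (GH.fd3 x).fderiv]
      fin_cases i <;> simp [EuclideanSpace.single_apply]
    · show fderiv ℝ (fun y => fderiv ℝ p y (EuclideanSpace.single (4:Fin 5) 1))
        x (EuclideanSpace.single i 1) = _
      rw [e4, (GH.fd4 x).fderiv]
      fin_cases i <;> simp [EuclideanSpace.single_apply]
  constructor
  · intro x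
    rw [hM x]
    by_cases hd : x 3 = 0 ∧ x 4 = 0
    · apply Matrix.det_eq_zero_of_row_eq_zero 0
      intro j; fin_cases j <;> simp [hd.1, hd.2]
    · rw [← Matrix.exists_vecMul_eq_zero_iff]
      refine ⟨![(x 4)^2, -(x 3*x 4), (x 3)^2, 0, 0], ?_, ?_⟩
      · intro hzero
        rcases not_and_or.mp hd with h3 | h4
        · exact h3 (by have := congrFun hzero 2; simpa [pow_eq_zero_iff] using this)
        · exact h4 (by have := congrFun hzero 0; simpa [pow_eq_zero_iff] using this)
      · funext j
        fin_cases j <;>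
          simp [Matrix.vecMul, dotProduct, Fin.sum_univ_succ] <;> ring
  · rintro ⟨v, c, hv, h⟩
    replace h : ∀ x, GH.D x v = c := by
      intro x
      rw [← h x]
      symm
      rw [real_inner_comm]
      show ⟪gradient p x, v⟫ = _
      simp only [gradient]
      rw [InnerProductSpace.toDual_symm_apply, GH.fderiv_p hp]
    have q : ∀ f : Fin 5 → ℝ,
        (f 3)^2 * v 0 + (2*f 3*f 4) * v 1 + (f 4)^2 * v 2
          + (2*f 0*f 3 + 2*f 1*f 4) * v 3 + (2*f 1*f 3 + 2*f 2*f 4) * v 4 = c := by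
      intro f
      have := h ((WithLp.equiv 2 (Fin 5 → ℝ)).symm f)
      rwa [GH.D_apply] at this
      
    have q0 := q ![0,0,0,0,0]
    have q1 := q ![0,0,0,1,0]
    have q2 := q ![0,0,0,0,1]
    have q3 := q ![0,0,0,1,1]
    have q4 := q ![1,0,0,1,0]
    have q5 := q ![0,0,1,0,1]
    simp at q0 q1 q2 q3 q4 q5
    apply hv
    ext i
    fin_cases i <;> simp <;> linarith
end
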